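/- arXiv:1908.07845 — 3 statements merged into one kernel-verified Lean document; each statement's English description precedes it below -/
import Mathlib

section
/- Let m ≥ 2, a ∈ (0, 1/m), and let D := log_{1/a} m. For every s ∈ ℂ with Re s ≥ D + ε for some ε > 0 and s bounded away from the set D + (2π/log(1/a)) i ℤ, the series ζ(s) := Σ_{n≥1} (n!)^{-s} (1 − m·a^s)^{-n} converges absolutely; hence ζ defines a holomorphic function on {Re s > D'} ∖ S for any D' > 0 where S is the set of zeros of 1 − m·a^s. -/
/-!
Because `(n!)^σ` outgrows every geometric sequence, `Σ R^n / (n!)^σ` converges for all `R` and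
`σ > 0` (ratio test). Where `‖1 - m a^s‖ ≥ ε` and `Re s ≥ σ` this series with `R = ε⁻¹`
dominates `ζ`. Near any `s₀` with `1 - m a^{s₀} ≠ 0` such an `ε` works uniformly, so the
Weierstrass M-test makes `ζ` holomorphic there.
-/

open Complex Filter Topology Nat

theorem Real.summable_pow_div_factorial_rpow {σ : ℝ} (hσ : 0 < σ) (R : ℝ) :
    Summable fun n : ℕ => R ^ n / (n ! : ℝ) ^ σ := by
  have hratio : Tendsto (fun n : ℕ => |R| / ((n : ℝ) + 1) ^ σ) atTop (𝓝 0) :=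
    tendsto_const_nhds.div_atTop <| (tendsto_rpow_atTop hσ).comp <|
      tendsto_atTop_add_const_right atTop 1 tendsto_natCast_atTop_atTop
  refine summable_of_ratio_norm_eventually_le (r := 1 / 2) (by norm_num) ?_
  filter_upwards [hratio.eventually (eventually_le_nhds (by norm_num : (0 : ℝ) < 1 / 2))]
    with n hn
  have hstep : R ^ (n + 1) / ((n + 1)! : ℝ) ^ σ
      = R / ((n : ℝ) + 1) ^ σ * (R ^ n / (n ! : ℝ) ^ σ) := by
    rw [Nat.factorial_succ, Nat.cast_mul, Real.mul_rpow (by positivity) (by positivity)]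
    push_cast
    ring
  rw [hstep, norm_mul, Real.norm_eq_abs (R / _), abs_div,
    abs_of_pos (by positivity : (0 : ℝ) < ((n : ℝ) + 1) ^ σ)]
  exact mul_le_mul_of_nonneg_right hn (norm_nonneg _)

theorem norm_factorial_cpow_neg_mul_inv_pow_le {σ ε : ℝ} {s w : ℂ} (hσs : σ ≤ s.re)
    (hε : 0 < ε) (hεw : ε ≤ ‖w‖) (n : ℕ) :
    ‖(n ! : ℂ) ^ (-s) * w⁻¹ ^ n‖ ≤ ε⁻¹ ^ n / (n ! : ℝ) ^ σ := by
  rw [norm_mul, norm_pow, norm_inv, norm_natCast_cpow_of_pos (factorial_pos n), neg_re,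
    Real.rpow_neg (cast_nonneg _), mul_comm, ← div_eq_mul_inv]
  gcongr
  exact_mod_cast Nat.one_le_iff_ne_zero.mpr (factorial_ne_zero n)

theorem differentiableOn_tsum_factorial_cpow_neg_mul_inv_pow {g : ℂ → ℂ} {σ : ℝ} (hσ : 0 < σ)
    (hg : DifferentiableOn ℂ g {s | σ < s.re}) :
    DifferentiableOn ℂ (fun s => ∑' n : ℕ, ((n + 1)! : ℂ) ^ (-s) * (g s)⁻¹ ^ (n + 1))
      ({s | σ < s.re} \ {s | g s = 0}) := by
  refine differentiableOn_of_locally_differentiableOn fun x hx => ?_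
  have hgx : 0 < ‖g x‖ := norm_pos_iff.mpr hx.2
  set ε := ‖g x‖ / 2
  set W := {s : ℂ | σ < s.re} ∩ g ⁻¹' {z | ε < ‖z‖}
  have hW : IsOpen W := hg.continuousOn.isOpen_inter_preimage
    (isOpen_lt continuous_const continuous_re) (isOpen_lt continuous_const continuous_norm)
  have hgW : ∀ s ∈ W, g s ≠ 0 := fun s hs => norm_pos_iff.mp ((half_pos hgx).trans hs.2)
  refine ⟨W, hW, ⟨hx.1, half_lt_self hgx⟩, DifferentiableOn.mono ?_ Set.inter_subset_right⟩
  refine differentiableOn_tsum_of_summable_norm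
    ((summable_nat_add_iff 1).mpr (Real.summable_pow_div_factorial_rpow hσ ε⁻¹)) (fun n => ?_) hW
    (fun n s hs => norm_factorial_cpow_neg_mul_inv_pow_le hs.1.le (half_pos hgx) hs.2.le (n + 1))
  exact (differentiableOn_id.neg.const_cpow (Or.inl (mod_cast factorial_ne_zero _))).mul
    (((hg.mono Set.inter_subset_left).inv hgW).pow _)

theorem zeta_infinite_order_convergence_general (m : ℕ) (a : ℝ) :
    (∀ s : ℂ, 0 < s.re → ∀ ε : ℝ, 0 < ε →
      ε ≤ ‖1 - (m : ℂ) * ((a : ℝ) : ℂ) ^ s‖ →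
      Summable fun n : ℕ => ‖
        (((Nat.factorial (n + 1) : ℂ)) ^ (-s) *
          ((1 - (m : ℂ) * ((a : ℝ) : ℂ) ^ s)⁻¹) ^ (n + 1))‖) ∧
    (∀ D' : ℝ, 0 < D' →
      DifferentiableOn ℂ
        (fun s : ℂ => ∑' n : ℕ, ((Nat.factorial (n + 1) : ℂ)) ^ (-s) *
          ((1 - (m : ℂ) * ((a : ℝ) : ℂ) ^ s)⁻¹) ^ (n + 1))
        ({s : ℂ | D' < s.re} \ {s : ℂ | 1 - (m : ℂ) * ((a : ℝ) : ℂ) ^ s = 0})) := by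
  refine ⟨fun s hs ε hε hεs => ?_, fun D' hD' => ?_⟩
  · exact Summable.of_nonneg_of_le (fun _ => norm_nonneg _)
      (fun n => norm_factorial_cpow_neg_mul_inv_pow_le le_rfl hε hεs (n + 1))
      ((summable_nat_add_iff 1).mpr (Real.summable_pow_div_factorial_rpow hs ε⁻¹))
  · refine differentiableOn_tsum_factorial_cpow_neg_mul_inv_pow hD' ?_
    refine (differentiableOn_const _).sub ((differentiableOn_const _).mul fun s hs => ?_)
    have hs0 : s ≠ 0 := by
      rintro rfl
      exact lt_asymm hD' hs
    exact (differentiableAt_id.const_cpow (Or.inr hs0)).differentiableWithinAt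

/-- The series `ζ(s) = Σ_{n≥1} (n!)^{-s} (1 − m a^s)^{-n}` converges absolutely for
`Re s > 0` whenever `|1 − m a^s|` is bounded below by some `ε > 0`; hence it defines a
holomorphic function on `{Re s > D'} ∖ S` for any `D' > 0`, where `S` is the set of
zeros of `1 − m a^s`. -/
theorem zeta_infinite_order_convergence (m : ℕ) (hm : 2 ≤ m) (a : ℝ)
    (ha : 0 < a) (ham : a < 1 / m) :
    (∀ s : ℂ, 0 < s.re → ∀ ε : ℝ, 0 < ε →
      ε ≤ ‖1 - (m : ℂ) * ((a : ℝ) : ℂ) ^ s‖ →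
      Summable fun n : ℕ => ‖
        (((Nat.factorial (n + 1) : ℂ)) ^ (-s) *
          ((1 - (m : ℂ) * ((a : ℝ) : ℂ) ^ s)⁻¹) ^ (n + 1))‖) ∧
    (∀ D' : ℝ, 0 < D' →
      DifferentiableOn ℂ
        (fun s : ℂ => ∑' n : ℕ, ((Nat.factorial (n + 1) : ℂ)) ^ (-s) *
          ((1 - (m : ℂ) * ((a : ℝ) : ℂ) ^ s)⁻¹) ^ (n + 1))
        ({s : ℂ | D' < s.re} \ {s : ℂ | 1 - (m : ℂ) * ((a : ℝ) : ℂ) ^ s = 0})) :=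
  zeta_infinite_order_convergence_general m a
end

section
/- Let k₀ ≥ 1 and suppose U ⊆ ℂ is an open disk whose closure satisfies D_{k₀+1} < inf_{s∈U} Re s ≤ sup_{s∈U} Re s < D_{k₀}, where (D_k) is a strictly decreasing sequence and a_k := m_k^{-1/D_k} with integers m_k ≥ 2 strictly increasing. Then there exists ε > 0 such that |1 − m_k·a_k^s| ≥ ε for all s ∈ U and all k ≥ 1. -/
open Complex

/-!
Since `‖m_k a_k^s‖ = m_k^(1 - Re s / D_k)`, the reverse triangle inequality bounds
`‖1 - m_k a_k^s‖` below by `|m_k^(1 - Re s / D_k) - 1|`. Monotonicity of `D` and `m` makes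
this uniform in `k`: for `k ≤ k₀` the power is at least `m_0^(1 - hi / D_{k₀}) > 1`, and for
`k > k₀` it is at most `m_{k₀+1}^(1 - lo / D_{k₀+1}) < 1`.
-/

theorem norm_ofReal_mul_cpow_rpow_neg_inv {x : ℝ} (hx : 0 < x) (d : ℝ) (s : ℂ) :
    ‖(x : ℂ) * ((x ^ (-(1 / d)) : ℝ) : ℂ) ^ s‖ = x ^ (1 - s.re / d) := by
  rw [norm_mul, norm_cpow_eq_rpow_re_of_pos (Real.rpow_pos_of_pos hx _), norm_real,
    Real.norm_of_nonneg hx.le, ← Real.rpow_mul hx.le,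
    show 1 - s.re / d = 1 + -(1 / d) * s.re by ring, Real.rpow_add hx, Real.rpow_one]

theorem abs_rpow_sub_one_le_norm_one_sub {x : ℝ} (hx : 0 < x) (d : ℝ) (s : ℂ) :
    |x ^ (1 - s.re / d) - 1| ≤ ‖1 - (x : ℂ) * ((x ^ (-(1 / d)) : ℝ) : ℂ) ^ s‖ := by
  have := abs_norm_sub_norm_le ((x : ℂ) * ((x ^ (-(1 / d)) : ℝ) : ℂ) ^ s) 1
  rwa [norm_ofReal_mul_cpow_rpow_neg_inv hx, norm_one, norm_sub_rev] at this

theorem rpow_le_rpow_of_base_le_of_exponent_le {b x δ e : ℝ} (hb : 1 ≤ b) (hbx : b ≤ x)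
    (hδ : 0 ≤ δ) (hδe : δ ≤ e) : b ^ δ ≤ x ^ e :=
  (Real.rpow_le_rpow (by linarith) hbx hδ).trans
    (Real.rpow_le_rpow_of_exponent_le (hb.trans hbx) hδe)

theorem rpow_le_rpow_of_base_le_of_exponent_le_nonpos {b x e E : ℝ} (hb : 1 ≤ b) (hbx : b ≤ x)
    (hE : E ≤ 0) (heE : e ≤ E) : x ^ e ≤ b ^ E :=
  (Real.rpow_le_rpow_of_exponent_le (hb.trans hbx) heE).trans
    (Real.rpow_le_rpow_of_nonpos (by linarith) hbx hE)

theorem exists_pos_le_abs_rpow_one_sub_div_sub_one {D x : ℕ → ℝ} (hD : Antitone D)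
    (hDpos : ∀ k, 0 < D k) (hx : Monotone x) (hx0 : 1 < x 0) {k₀ : ℕ} {lo hi : ℝ}
    (hlo : D (k₀ + 1) < lo) (hhi : hi < D k₀) :
    ∃ ε > 0, ∀ σ ∈ Set.Icc lo hi, ∀ k, ε ≤ |x k ^ (1 - σ / D k) - 1| := by
  set δ := 1 - hi / D k₀
  set E := 1 - lo / D (k₀ + 1)
  have hδ : 0 < δ := sub_pos.2 ((div_lt_one (hDpos k₀)).2 hhi)
  have hE : E < 0 := sub_neg.2 ((one_lt_div (hDpos _)).2 hlo)
  have hx1 : ∀ k, 1 ≤ x k := fun k => hx0.le.trans (hx (Nat.zero_le k))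
  have hlow : 1 < x 0 ^ δ := Real.one_lt_rpow hx0 hδ
  have hupp : x (k₀ + 1) ^ E < 1 :=
    Real.rpow_lt_one_of_one_lt_of_neg (hx0.trans_le (hx (Nat.zero_le _))) hE
  refine ⟨min (x 0 ^ δ - 1) (1 - x (k₀ + 1) ^ E), lt_min (by linarith) (by linarith), ?_⟩
  rintro σ ⟨hσlo, hσhi⟩ k
  have hlo_pos : 0 < lo := (hDpos _).trans hlo
  rcases le_or_gt k k₀ with hk | hk
  · have hexp : δ ≤ 1 - σ / D k :=
      sub_le_sub_left
        (div_le_div₀ (hlo_pos.le.trans (hσlo.trans hσhi)) hσhi (hDpos k₀) (hD hk)) 1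
    have := rpow_le_rpow_of_base_le_of_exponent_le (hx1 0) (hx (Nat.zero_le k)) hδ.le hexp
    exact (min_le_left _ _).trans (by rw [abs_of_nonneg (by linarith)]; linarith)
  · have hexp : 1 - σ / D k ≤ E :=
      sub_le_sub_left (div_le_div₀ (hlo_pos.le.trans hσlo) hσlo (hDpos k) (hD hk)) 1
    have := rpow_le_rpow_of_base_le_of_exponent_le_nonpos (hx1 (k₀ + 1)) (hx hk) hE.le hexp
    exact (min_le_right _ _).trans (by rw [abs_of_nonpos (by linarith)]; linarith)

theorem uniform_lower_bound_on_strip_general (D : ℕ → ℝ) (hDanti : StrictAnti D)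
    (hDpos : ∀ k, 0 < D k)
    (m : ℕ → ℕ) (hmmono : StrictMono m) (hm0 : 2 ≤ m 0)
    (k₀ : ℕ) (U : Set ℂ)
    (lo hi : ℝ) (hlo : D (k₀ + 1) < lo) (hhi : hi < D k₀)
    (hbounds : ∀ s ∈ U, lo ≤ s.re ∧ s.re ≤ hi) :
    ∃ ε : ℝ, 0 < ε ∧ ∀ s ∈ U, ∀ k : ℕ,
      ε ≤ ‖
        (1 - (m k : ℂ) * (((m k : ℝ) ^ (-(1 / D k)) : ℝ) : ℂ) ^ s)‖ := by
  have hm : Monotone fun k => (m k : ℝ) := fun _ _ h => Nat.cast_le.2 (hmmono.monotone h)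
  have hm0' : (1 : ℝ) < m 0 := by exact_mod_cast hm0
  obtain ⟨ε, hε, hbound⟩ :=
    exists_pos_le_abs_rpow_one_sub_div_sub_one hDanti.antitone hDpos hm hm0' hlo hhi
  refine ⟨ε, hε, fun s hs k => (hbound s.re (hbounds s hs) k).trans ?_⟩
  have hmk : (0 : ℝ) < m k := by linarith [hm (Nat.zero_le k)]
  exact_mod_cast abs_rpow_sub_one_le_norm_one_sub hmk (D k) s

/-- Let `(D_k)` be a strictly decreasing sequence of positive reals, `(m_k)` a strictly
increasing sequence of integers with `m_0 ≥ 2`, and `a_k := m_k^{-1/D_k}`.  If `U` is an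
open disk whose real parts satisfy `D_{k₀+1} < inf_{s∈U} Re s ≤ sup_{s∈U} Re s < D_{k₀}`,
then there is `ε > 0` with `|1 − m_k a_k^s| ≥ ε` for all `s ∈ U` and all `k`. -/
theorem uniform_lower_bound_on_strip (D : ℕ → ℝ) (hDanti : StrictAnti D)
    (hDpos : ∀ k, 0 < D k)
    (m : ℕ → ℕ) (hmmono : StrictMono m) (hm0 : 2 ≤ m 0)
    (k₀ : ℕ) (c : ℂ) (r : ℝ) (hr : 0 < r)
    (U : Set ℂ) (hU : U = Metric.ball c r)
    (lo hi : ℝ) (hlo : D (k₀ + 1) < lo) (hhi : hi < D k₀)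
    (hbounds : ∀ s ∈ U, lo ≤ s.re ∧ s.re ≤ hi) :
    ∃ ε : ℝ, 0 < ε ∧ ∀ s ∈ U, ∀ k : ℕ,
      ε ≤ ‖
        (1 - (m k : ℂ) * (((m k : ℝ) ^ (-(1 / D k)) : ℝ) : ℂ) ^ s)‖ :=
  uniform_lower_bound_on_strip_general D hDanti hDpos m hmmono hm0 k₀ U lo hi hlo hhi hbounds
end

section
/- Shift property of distance zeta functions: Let L = (ℓ_j) be a bounded fractal string with canonical geometric realization A_L := {a_k := Σ_{j≥k} ℓ_j : k ∈ ℕ} ⊂ [0, a₁], and let N ≥ 2 and δ > ℓ₁/2. Then the contribution of the region V₁ := [0,a₁] × [0,1]^{N−1} to the distance zeta function of A' := A_L × [0,1]^{N−1} ⊂ ℝ^N equals ∫_{V₁} d(x, A')^{s−N} dx = (2^{N−s}/(s − N + 1))·ζ_L(s − N + 1), for all s ∈ ℂ with Re s > N − 1 + D(ζ_L). -/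
open Complex Set

/-!
Over each slab `[a_{k+1}, a_k] × [0,1]^{N-1}` the distance to `A'` only sees the first
coordinate, so Fubini reduces the integral to `∫₀^{a₀} d(t, A_L)^{s-N} dt`. The intervals
`(a_{k+1}, a_k]` tile `(0, a₀]`, and on each of them `d(t, A_L) = min(t - a_{k+1}, a_k - t)`,
whose `(s-N)`-th power integrates to `2 (ℓ_k/2)^{s-N+1}/(s-N+1)`. Summing over `k` is
legitimate because `Re s - N + 1` exceeds the abscissa of convergence of `ζ_L`, which makes the
integrals of the norms summable.
-/

open MeasureTheory Filter Topology Metric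

section

variable {E : Type*} [NormedAddCommGroup E] {c d : ℝ} {f : ℝ → E}

lemma integrableOn_Ioc_comp_min_sub (hcd : c ≤ d)
    (hf : IntervalIntegrable f volume 0 ((d - c) / 2)) :
    IntegrableOn (fun t => f (min (t - c) (d - t))) (Ioc c d) := by
  have hleft : IntegrableOn (fun t => f (t - c)) (Ioc c ((c + d) / 2)) := by
    have := hf.comp_sub_right c
    rw [zero_add, show (d - c) / 2 + c = (c + d) / 2 by ring] at this
    exact this.1
  have hright : IntegrableOn (fun t => f (d - t)) (Ioc ((c + d) / 2) d) := by
    have := (hf.comp_sub_left d).symm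
    rw [sub_zero, show d - (d - c) / 2 = (c + d) / 2 by ring] at this
    exact this.1
  rw [← Ioc_union_Ioc_eq_Ioc (by linarith : c ≤ (c + d) / 2) (by linarith : (c + d) / 2 ≤ d)]
  refine (hleft.congr_fun (fun t ht => ?_) measurableSet_Ioc).union
    (hright.congr_fun (fun t ht => ?_) measurableSet_Ioc)
  · rw [min_eq_left (by linarith [ht.2])]
  · rw [min_eq_right (by linarith [ht.1])]

lemma integral_Ioc_comp_min_sub [NormedSpace ℝ E] (hcd : c ≤ d)
    (hf : IntervalIntegrable f volume 0 ((d - c) / 2)) :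
    ∫ t in Ioc c d, f (min (t - c) (d - t)) = (2 : ℝ) • ∫ u in 0..(d - c) / 2, f u := by
  set m := (c + d) / 2 with hm
  have hcm : c ≤ m := by rw [hm]; linarith
  have hmd : m ≤ d := by rw [hm]; linarith
  have hint := integrableOn_Ioc_comp_min_sub hcd hf
  have hleft : ∫ t in Ioc c m, f (min (t - c) (d - t)) = ∫ u in 0..(d - c) / 2, f u := by
    rw [setIntegral_congr_fun measurableSet_Ioc
        (fun t ht => by rw [min_eq_left (by linarith [ht.2, hm])]),
      ← intervalIntegral.integral_of_le hcm, intervalIntegral.integral_comp_sub_right, sub_self,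
      show m - c = (d - c) / 2 by ring]
  have hright : ∫ t in Ioc m d, f (min (t - c) (d - t)) = ∫ u in 0..(d - c) / 2, f u := by
    rw [setIntegral_congr_fun measurableSet_Ioc
        (fun t ht => by rw [min_eq_right (by linarith [ht.1, hm])]),
      ← intervalIntegral.integral_of_le hmd, intervalIntegral.integral_comp_sub_left, sub_self,
      show d - m = (d - c) / 2 by ring]
  rw [← Ioc_union_Ioc_eq_Ioc hcm hmd, setIntegral_union (Ioc_disjoint_Ioc_of_le le_rfl)
    measurableSet_Ioc (hint.mono_set (Ioc_subset_Ioc_right hmd))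
    (hint.mono_set (Ioc_subset_Ioc_left hcm)), hleft, hright, two_smul]

end

lemma Real.infDist_eq_min_sub {R : Set ℝ} {c d t : ℝ} (hc : c ∈ R) (hd : d ∈ R)
    (hgap : ∀ y ∈ R, y ≤ c ∨ d ≤ y) (ht : t ∈ Icc c d) :
    infDist t R = min (t - c) (d - t) := by
  refine le_antisymm (le_min ?_ ?_) ((le_infDist ⟨c, hc⟩).2 fun y hy => ?_)
  · simpa [Real.dist_eq, abs_of_nonneg (sub_nonneg.2 ht.1)]
      using infDist_le_dist_of_mem (x := t) hc
  · simpa [Real.dist_eq, abs_of_nonpos (sub_nonpos.2 ht.2)]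
      using infDist_le_dist_of_mem (x := t) hd
  · rw [Real.dist_eq]
    rcases hgap y hy with h | h
    · exact (min_le_left _ _).trans (by linarith [le_abs_self (t - y)])
    · exact (min_le_right _ _).trans (by linarith [neg_le_abs (t - y)])

lemma Antitone.iUnion_Ioc_succ_eq {a : ℕ → ℝ} {L : ℝ} (ha : Antitone a)
    (hlim : Tendsto a atTop (𝓝 L)) : ⋃ k, Ioc (a (k + 1)) (a k) = Ioc L (a 0) := by
  ext t
  simp only [mem_iUnion, mem_Ioc]
  constructor
  · rintro ⟨k, h₁, h₂⟩
    exact ⟨(ha.le_of_tendsto hlim (k + 1)).trans_lt h₁, h₂.trans (ha k.zero_le)⟩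
  · rintro ⟨h₁, h₂⟩
    by_contra! hnot
    have hle : ∀ k, t ≤ a k := fun k =>
      Nat.rec h₂ (fun k hk => not_lt.1 fun h => (hnot k h).not_ge hk) k
    exact h₁.not_ge (ge_of_tendsto' hlim hle)

theorem integral_Ioc_comp_infDist_range {E : Type*} [NormedAddCommGroup E] [NormedSpace ℝ E]
    [CompleteSpace E] {a : ℕ → ℝ} {L : ℝ} (ha : Antitone a) (hlim : Tendsto a atTop (𝓝 L))
    {f : ℝ → E} (hf : ∀ k, IntervalIntegrable f volume 0 ((a k - a (k + 1)) / 2))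
    (hsum : Summable fun k => ∫ u in 0..(a k - a (k + 1)) / 2, ‖f u‖) :
    ∫ t in Ioc L (a 0), f (infDist t (range a))
      = ∑' k, (2 : ℝ) • ∫ u in 0..(a k - a (k + 1)) / 2, f u := by
  have hgap : ∀ k, ∀ y ∈ range a, y ≤ a (k + 1) ∨ a k ≤ y := by
    rintro k _ ⟨m, rfl⟩
    rcases le_or_gt m k with h | h
    · exact Or.inr (ha h)
    · exact Or.inl (ha h)
  have heq : ∀ k, EqOn (fun t => f (infDist t (range a)))
      (fun t => f (min (t - a (k + 1)) (a k - t))) (Ioc (a (k + 1)) (a k)) := fun k t ht => by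
    simp only [Real.infDist_eq_min_sub (mem_range_self _) (mem_range_self _) (hgap k)
      (Ioc_subset_Icc_self ht)]
  have hint : ∀ k, IntegrableOn (fun t => f (infDist t (range a))) (Ioc (a (k + 1)) (a k)) :=
    fun k => (integrableOn_Ioc_comp_min_sub (ha k.le_succ) (hf k)).congr_fun (heq k).symm
      measurableSet_Ioc
  have hnorm : ∀ k, ∫ t in Ioc (a (k + 1)) (a k), ‖f (infDist t (range a))‖
      = 2 * ∫ u in 0..(a k - a (k + 1)) / 2, ‖f u‖ := fun k => by
    rw [setIntegral_congr_fun measurableSet_Ioc (fun t ht => congrArg norm (heq k ht)),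
      integral_Ioc_comp_min_sub (f := fun u => ‖f u‖) (ha k.le_succ) (hf k).norm, smul_eq_mul]
  rw [← ha.iUnion_Ioc_succ_eq hlim, integral_iUnion (fun _ => measurableSet_Ioc)
    (s := fun k => Ioc (a (k + 1)) (a k)) ha.pairwise_disjoint_on_Ioc_succ
    (integrableOn_iUnion_of_summable_integral_norm hint
      (by simpa only [hnorm] using hsum.mul_left 2))]
  exact tsum_congr fun k => by
    rw [setIntegral_congr_fun measurableSet_Ioc (heq k),
      integral_Ioc_comp_min_sub (ha k.le_succ) (hf k)]

lemma EuclideanSpace.dist_toLp_update_self {ι : Type*} [Fintype ι] [DecidableEq ι]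
    (x : EuclideanSpace ℝ ι) (i : ι) (y : ℝ) :
    dist x (WithLp.toLp 2 (Function.update x.ofLp i y)) = dist (x i) y := by
  rw [EuclideanSpace.dist_eq, Finset.sum_eq_single_of_mem i (Finset.mem_univ i)
    fun j _ hj => by simp [Function.update_of_ne hj]]
  simp [Real.sqrt_sq_eq_abs, Real.dist_eq]

lemma EuclideanSpace.infDist_cylinder {ι : Type*} [Fintype ι] [DecidableEq ι] {i₀ : ι}
    {R : Set ℝ} {K : ι → Set ℝ} {x : EuclideanSpace ℝ ι} (hR : R.Nonempty)
    (hx : ∀ i, i ≠ i₀ → x i ∈ K i) :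
    infDist x {z : EuclideanSpace ℝ ι | z i₀ ∈ R ∧ ∀ i, i ≠ i₀ → z i ∈ K i}
      = infDist (x i₀) R := by
  have hmem : ∀ y ∈ R, WithLp.toLp 2 (Function.update x.ofLp i₀ y) ∈
      {z : EuclideanSpace ℝ ι | z i₀ ∈ R ∧ ∀ i, i ≠ i₀ → z i ∈ K i} := fun y hy =>
    ⟨by simpa using hy, fun i hi => by simpa [Function.update_of_ne hi] using hx i hi⟩
  obtain ⟨y₀, hy₀⟩ := hR
  refine le_antisymm ((le_infDist ⟨y₀, hy₀⟩).2 fun y hy => ?_)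
    ((le_infDist ⟨_, hmem y₀ hy₀⟩).2 fun z hz => ?_)
  · rw [← dist_toLp_update_self x i₀ y]
    exact infDist_le_dist_of_mem (hmem y hy)
  · exact (infDist_le_dist_of_mem hz.1).trans (PiLp.dist_apply_le x z i₀)

lemma EuclideanSpace.setIntegral_cylinder_unitCube {E : Type*} [NormedAddCommGroup E]
    [NormedSpace ℝ E] {n : ℕ} (i : Fin (n + 1)) (g : ℝ → E) (S : Set ℝ) :
    ∫ x in {x : EuclideanSpace ℝ (Fin (n + 1)) | x i ∈ S ∧ ∀ j, j ≠ i → x j ∈ Icc (0 : ℝ) 1},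
      g (x i) = ∫ t in S, g t := by
  let e := MeasurableEquiv.piFinSuccAbove (fun _ : Fin (n + 1) => ℝ) i
  have hpre : {y : Fin (n + 1) → ℝ | y i ∈ S ∧ ∀ j, j ≠ i → y j ∈ Icc (0 : ℝ) 1}
      = e ⁻¹' (S ×ˢ univ.pi fun _ => Icc 0 1) := by
    ext y
    simp [e, MeasurableEquiv.piFinSuccAbove_apply, Fin.forall_iff_succAbove i,
      Fin.succAbove_ne, Fin.removeNth, -pi_univ_Icc]
  calc _ = ∫ y in {y : Fin (n + 1) → ℝ | y i ∈ S ∧ ∀ j, j ≠ i → y j ∈ Icc (0 : ℝ) 1}, g (y i) :=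
        (volume_preserving_symm_measurableEquiv_toLp (Fin (n + 1))).setIntegral_preimage_emb
          (MeasurableEquiv.toLp 2 (Fin (n + 1) → ℝ)).symm.measurableEmbedding _ _
    _ = ∫ p in S ×ˢ univ.pi fun _ : Fin n => Icc (0 : ℝ) 1, g p.1 := by
        rw [hpre]
        exact (volume_preserving_piFinSuccAbove (fun _ : Fin (n + 1) => ℝ) i
          ).setIntegral_preimage_emb e.measurableEmbedding (fun p => g p.1) _
    _ = ∫ t in S, g t := by
        rw [Measure.volume_eq_prod, ← Measure.prod_restrict, integral_fun_fst, measureReal_def,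
          Measure.restrict_apply_univ, volume_pi_pi]
        simp

lemma integral_zero_ofReal_cpow {r : ℂ} (hr : -1 < r.re) (h : ℝ) :
    ∫ u in (0 : ℝ)..h, (u : ℂ) ^ r = (h : ℂ) ^ (r + 1) / (r + 1) := by
  have hr1 : r + 1 ≠ 0 := fun h0 => by
    have := congrArg re h0
    simp only [add_re, one_re, zero_re] at this
    linarith
  rw [integral_cpow (Or.inl hr), ofReal_zero, zero_cpow hr1, sub_zero]

lemma integral_zero_norm_ofReal_cpow {r : ℂ} (hr : -1 < r.re) {h : ℝ} (hh : 0 ≤ h) :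
    ∫ u in (0 : ℝ)..h, ‖(u : ℂ) ^ r‖ = h ^ (r.re + 1) / (r.re + 1) := by
  calc ∫ u in (0 : ℝ)..h, ‖(u : ℂ) ^ r‖ = ∫ u in (0 : ℝ)..h, u ^ r.re :=
        intervalIntegral.integral_congr_ae (ae_of_all _ fun u hu => by
          rw [uIoc_of_le hh] at hu
          exact norm_cpow_eq_rpow_re_of_pos hu.1 r)
    _ = h ^ (r.re + 1) / (r.re + 1) := by
        rw [integral_rpow (Or.inl hr), Real.zero_rpow (by linarith), sub_zero]

lemma two_mul_ofReal_half_cpow {x : ℝ} (hx : 0 ≤ x) (w : ℂ) :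
    2 * ((x / 2 : ℝ) : ℂ) ^ w = 2 ^ (1 - w) * (x : ℂ) ^ w := by
  have h2 : (2 : ℂ) ^ w ≠ 0 := cpow_ne_zero_iff.2 (Or.inl two_ne_zero)
  rw [ofReal_div, div_cpow_ofReal_nonneg hx zero_le_two, ofReal_ofNat, cpow_sub _ _ two_ne_zero,
    cpow_one]
  field_simp

lemma tsum_nat_add_sub_tsum_nat_add_succ {G : Type*} [AddCommGroup G] [TopologicalSpace G]
    [IsTopologicalAddGroup G] [T2Space G] {ℓ : ℕ → G} (hℓ : Summable ℓ) (k : ℕ) :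
    ∑' j, ℓ (j + k) - ∑' j, ℓ (j + (k + 1)) = ℓ k := by
  rw [((summable_nat_add_iff k).2 hℓ).tsum_eq_zero_add, zero_add, add_sub_assoc, add_eq_left,
    sub_eq_zero]
  exact tsum_congr fun j => congrArg ℓ (by omega)

section

variable {ℓ : ℕ → ℝ} (hpos : ∀ j, 0 < ℓ j)
include hpos

lemma pos_of_summable_rpow (hℓ : Tendsto ℓ atTop (𝓝 0)) {α : ℝ}
    (h : Summable fun j => ℓ j ^ α) : 0 < α := by
  by_contra! hα
  obtain ⟨j, hj₁, hj₂⟩ := ((hℓ.eventually_lt_const one_pos).and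
    (h.tendsto_atTop_zero.eventually_lt_const one_pos)).exists
  exact hj₂.not_ge (Real.one_le_rpow_of_pos_of_le_one_of_nonpos (hpos j) hj₁.le hα)

lemma summable_rpow_of_le (hℓ : Tendsto ℓ atTop (𝓝 0)) {α β : ℝ}
    (h : Summable fun j => ℓ j ^ α) (hαβ : α ≤ β) : Summable fun j => ℓ j ^ β :=
  h.of_norm_bounded_eventually_nat <| (hℓ.eventually_le_const one_pos).mono fun j hj => by
    rw [Real.norm_of_nonneg (Real.rpow_nonneg (hpos j).le _)]
    exact Real.rpow_le_rpow_of_exponent_ge (hpos j) hj hαβ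

lemma summable_rpow_of_sInf_lt (hsum : Summable ℓ) {β : ℝ}
    (hβ : sInf {α : ℝ | Summable fun j => ℓ j ^ α} < β) :
    0 < β ∧ Summable fun j => ℓ j ^ β := by
  obtain ⟨α, hα, hαβ⟩ := exists_lt_of_csInf_lt ⟨1, by simpa using hsum⟩ hβ
  have hℓ := hsum.tendsto_atTop_zero
  exact ⟨(pos_of_summable_rpow hpos hℓ hα).trans hαβ, summable_rpow_of_le hpos hℓ hα hαβ.le⟩

end

theorem distance_zeta_shift_general (ℓ : ℕ → ℝ) (hpos : ∀ j, 0 < ℓ j)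
    (hsum : Summable ℓ) (n : ℕ)
    (a : ℕ → ℝ) (ha : ∀ k, a k = ∑' j, ℓ (j + k))
    (A' : Set (EuclideanSpace ℝ (Fin (n + 1))))
    (hA' : A' = {x | (∃ k, x 0 = a k) ∧ ∀ i, i ≠ 0 → x i ∈ Icc (0 : ℝ) 1})
    (V₁ : Set (EuclideanSpace ℝ (Fin (n + 1))))
    (hV₁ : V₁ = {x | x 0 ∈ Icc 0 (a 0) ∧ ∀ i, i ≠ 0 → x i ∈ Icc (0 : ℝ) 1})
    (s : ℂ) (hs : (n : ℝ) + sInf {α : ℝ | Summable fun j => ℓ j ^ α} < s.re) :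
    ∫ x in V₁, ((Metric.infDist x A' : ℝ) : ℂ) ^ (s - (n + 1))
      = (2 : ℂ) ^ (((n : ℂ) + 1) - s) / (s - (n + 1) + 1) *
          ∑' j : ℕ, ((ℓ j : ℝ) : ℂ) ^ (s - (n + 1) + 1) := by
  obtain ⟨hβ, hβsum⟩ := summable_rpow_of_sInf_lt hpos hsum (β := s.re - n) (by linarith)
  set r := s - (n + 1)
  have hr : -1 < r.re := by simp only [r, sub_re, add_re, natCast_re, one_re]; linarith
  have hgap : ∀ k, a k - a (k + 1) = ℓ k := fun k => by
    rw [ha, ha, tsum_nat_add_sub_tsum_nat_add_succ hsum]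
  have hanti : Antitone a := antitone_nat_of_succ_le fun k => by linarith [hgap k, hpos k]
  have hlim : Tendsto a atTop (𝓝 0) := by simpa only [← ha] using tendsto_sum_nat_add ℓ
  have hA : A' = {x | x 0 ∈ range a ∧ ∀ i, i ≠ 0 → x i ∈ Icc (0 : ℝ) 1} := by
    simp only [hA', mem_range, eq_comm]
  have hV : MeasurableSet V₁ := by rw [hV₁]; measurability
  have hsum_norm : Summable fun k => ∫ u in (0 : ℝ)..(a k - a (k + 1)) / 2, ‖(u : ℂ) ^ r‖ := by
    have hre : r.re + 1 = s.re - n := by simp only [r, sub_re, add_re, natCast_re, one_re]; ring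
    simp_rw [hgap, integral_zero_norm_ofReal_cpow hr (half_pos (hpos _)).le, hre,
      Real.div_rpow (hpos _).le zero_le_two]
    exact (hβsum.div_const _).div_const _
  calc ∫ x in V₁, ((infDist x A' : ℝ) : ℂ) ^ r
      = ∫ x in V₁, ((infDist (x 0) (range a) : ℝ) : ℂ) ^ r :=
        setIntegral_congr_fun hV fun x hx => by
          rw [hA, EuclideanSpace.infDist_cylinder (range_nonempty a) (hV₁ ▸ hx).2]
    _ = ∫ t in Ioc 0 (a 0), ((infDist t (range a) : ℝ) : ℂ) ^ r := by
        rw [hV₁, EuclideanSpace.setIntegral_cylinder_unitCube 0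
          (fun t => ((infDist t (range a) : ℝ) : ℂ) ^ r), integral_Icc_eq_integral_Ioc]
    _ = ∑' k, (2 : ℝ) • ∫ u in (0 : ℝ)..(a k - a (k + 1)) / 2, (u : ℂ) ^ r :=
        integral_Ioc_comp_infDist_range hanti hlim
          (fun _ => intervalIntegral.intervalIntegrable_cpow' hr) hsum_norm
    _ = _ := by
        rw [← tsum_mul_left]
        refine tsum_congr fun k => ?_
        rw [hgap, integral_zero_ofReal_cpow hr, real_smul, ofReal_ofNat, ← mul_div_assoc,
          two_mul_ofReal_half_cpow (hpos k).le, show (n : ℂ) + 1 - s = 1 - (r + 1) by ring]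
        ring

/-- Shift property of distance zeta functions.  Let `L = (ℓ_j)` be a bounded fractal
string with canonical geometric realization `A_L = {a_k := Σ_{j≥k} ℓ_j}` and let
`N = n + 1 ≥ 2`, `δ > ℓ_0/2`.  With `A' := A_L × [0,1]^{N−1} ⊆ ℝ^N` and
`V₁ := [0, a_0] × [0,1]^{N−1}`, for all `s` with `Re s > N − 1 + D(ζ_L)` one has
`∫_{V₁} d(x,A')^{s−N} dx = (2^{N−s}/(s − N + 1)) ζ_L(s − N + 1)`. -/
theorem distance_zeta_shift (ℓ : ℕ → ℝ) (hpos : ∀ j, 0 < ℓ j) (hanti : Antitone ℓ)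
    (hsum : Summable ℓ) (n : ℕ) (hn : 1 ≤ n) (δ : ℝ) (hδ : ℓ 0 / 2 < δ)
    (a : ℕ → ℝ) (ha : ∀ k, a k = ∑' j, ℓ (j + k))
    (A' : Set (EuclideanSpace ℝ (Fin (n + 1))))
    (hA' : A' = {x | (∃ k, x 0 = a k) ∧ ∀ i, i ≠ 0 → x i ∈ Icc (0 : ℝ) 1})
    (V₁ : Set (EuclideanSpace ℝ (Fin (n + 1))))
    (hV₁ : V₁ = {x | x 0 ∈ Icc 0 (a 0) ∧ ∀ i, i ≠ 0 → x i ∈ Icc (0 : ℝ) 1})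
    (s : ℂ) (hs : (n : ℝ) + sInf {α : ℝ | Summable fun j => ℓ j ^ α} < s.re) :
    ∫ x in V₁, ((Metric.infDist x A' : ℝ) : ℂ) ^ (s - (n + 1))
      = (2 : ℂ) ^ (((n : ℂ) + 1) - s) / (s - (n + 1) + 1) *
          ∑' j : ℕ, ((ℓ j : ℝ) : ℂ) ^ (s - (n + 1) + 1) :=
  distance_zeta_shift_general ℓ hpos hsum n a ha A' hA' V₁ hV₁ s hs
end
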